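/- Let A_* be a filtered ring, M_* a filtered right A_*-module and N_* a filtered left A_*-module (filtrations indexed by Z, with the balanced product M_* ⊗_{A_*} N_* defined as the coequalizer of the two maps M_* ⊗ A_* ⊗ N_* ⇉ M_* ⊗ N_* in filtered objects, using Day convolution). Then there is a canonical natural isomorphism Gr(M_* ⊗_{A_*} N_*) ≅ Gr(M_*) ⊗_{Gr(A_*)} Gr(N_*). -/

import Mathlib

open TensorProduct DirectSum

noncomputable section
namespace Stmt11

variable (R : Type) [CommRing R]
variable (A M N : ℤ → Type)
variable [∀ i, AddCommGroup (A i)] [∀ i, Module R (A i)]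
variable [∀ i, AddCommGroup (M i)] [∀ i, Module R (M i)]
variable [∀ i, AddCommGroup (N i)] [∀ i, Module R (N i)]
variable (tA : ∀ i j : ℤ, i ≤ j → (A i →ₗ[R] A j))
variable (tM : ∀ i j : ℤ, i ≤ j → (M i →ₗ[R] M j))
variable (tN : ∀ i j : ℤ, i ≤ j → (N i →ₗ[R] N j))
variable (u : A 0)
variable (μ : ∀ i j : ℤ, A i →ₗ[R] A j →ₗ[R] A (i + j))
variable (ξ : ∀ i j : ℤ, M i →ₗ[R] A j →ₗ[R] M (i + j))
variable (ζ : ∀ i j : ℤ, A i →ₗ[R] N j →ₗ[R] N (i + j))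

/-- The index set for degree `n` of the Day convolution: pairs `(i,j)` with `i + j = n`. -/
abbrev CIdx (n : ℤ) : Type := {p : ℤ × ℤ // p.1 + p.2 = n}

/-- The direct sum `⊕_{i+j=n} Mᵢ ⊗ Nⱼ`. -/
abbrev MNSum (n : ℤ) : Type :=
  DirectSum (CIdx n) (fun p => M p.1.1 ⊗[R] N p.1.2)

/-- The canonical inclusion of the `(i,j)` summand. -/
abbrev mnLof (n : ℤ) (p : CIdx n) :
    (M p.1.1 ⊗[R] N p.1.2) →ₗ[R] MNSum R M N n :=
  DirectSum.lof R (CIdx n) (fun q => M q.1.1 ⊗[R] N q.1.2) p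

/-- The relations presenting `(M ⊛ N)ₙ = colim_{i+j≤n} Mᵢ ⊗ Nⱼ` as a quotient of
`⊕_{i+j=n} Mᵢ ⊗ Nⱼ`. -/
def MNConvRel (n : ℤ) : Submodule R (MNSum R M N n) :=
  Submodule.span R {z | ∃ (i j : ℤ) (hij : i + j + 1 = n) (x : M i) (y : N j),
    z = mnLof R M N n ⟨(i, j + 1), by omega⟩ (x ⊗ₜ[R] tN j (j + 1) (by omega) y)
      - mnLof R M N n ⟨(i + 1, j), by omega⟩ (tM i (i + 1) (by omega) x ⊗ₜ[R] y)}

/-- Degree `n` of the Day convolution `M ⊛ N`. -/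
abbrev MNConv (n : ℤ) : Type := MNSum R M N n ⧸ MNConvRel R M N tM tN n

/-- The relations defining the balanced smash product `M ⊛_A N` as the coequalizer of
`M ⊛ A ⊛ N ⇉ M ⊛ N`: for `i + j + k = n`, `(x·a) ⊗ y` and `x ⊗ (a·y)` are identified. -/
def BalRel (n : ℤ) : Submodule R (MNConv R M N tM tN n) :=
  Submodule.span R
    {w | ∃ (i j k : ℤ) (hijk : i + j + k = n) (x : M i) (a : A j) (y : N k),
      w = Submodule.Quotient.mk
            (mnLof R M N n ⟨(i + j, k), by omega⟩ (ξ i j x a ⊗ₜ[R] y))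
        - Submodule.Quotient.mk
            (mnLof R M N n ⟨(i, j + k), by omega⟩ (x ⊗ₜ[R] ζ j k a y))}

/-- Degree `n` of the balanced product `M ⊛_A N` (a filtered object). -/
abbrev Bal (n : ℤ) : Type := MNConv R M N tM tN n ⧸ BalRel R A M N tM tN ξ ζ n

/-- The image of the structure map `(M ⊛_A N)_{n-1} → (M ⊛_A N)ₙ`. -/
def BalIm (n : ℤ) : Submodule R (Bal R A M N tM tN ξ ζ n) :=
  Submodule.span R {w | ∃ (i j : ℤ) (hij : i + j + 1 = n) (x : M i) (y : N j),
    w = Submodule.Quotient.mk (Submodule.Quotient.mk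
          (mnLof R M N n ⟨(i, j + 1), by omega⟩ (x ⊗ₜ[R] tN j (j + 1) (by omega) y)))}

/-- The associated graded `Gr_n(M ⊛_A N)`. -/
abbrev GrBal (n : ℤ) : Type :=
  Bal R A M N tM tN ξ ζ n ⧸ BalIm R A M N tM tN ξ ζ n

/-- The associated graded `Gr_i(M) = Mᵢ / M_{i-1}`. -/
abbrev GrM (i : ℤ) : Type := M i ⧸ LinearMap.range (tM (i - 1) i (by omega))

/-- The associated graded `Gr_j(N) = Nⱼ / N_{j-1}`. -/
abbrev GrN (j : ℤ) : Type := N j ⧸ LinearMap.range (tN (j - 1) j (by omega))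

/-- The direct sum `⊕_{i+j=n} Gr_i(M) ⊗ Gr_j(N)`, i.e. degree `n` of the graded product
`Gr(M) ⊗ Gr(N)`. -/
abbrev GrSum (n : ℤ) : Type :=
  DirectSum (CIdx n) (fun p => GrM R M tM p.1.1 ⊗[R] GrN R N tN p.1.2)

/-- The canonical inclusion of the `(i,j)` summand of the graded product. -/
abbrev grLof (n : ℤ) (p : CIdx n) :
    (GrM R M tM p.1.1 ⊗[R] GrN R N tN p.1.2) →ₗ[R] GrSum R M N tM tN n :=
  DirectSum.lof R (CIdx n) (fun q => GrM R M tM q.1.1 ⊗[R] GrN R N tN q.1.2) p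

/-- The relations defining the graded balanced product `Gr(M) ⊗_{Gr(A)} Gr(N)` (written on
representatives; the `Gr(A)`-actions on `Gr(M)`, `Gr(N)` are induced by `ξ`, `ζ`). -/
def GrBalRel (n : ℤ) : Submodule R (GrSum R M N tM tN n) :=
  Submodule.span R
    {w | ∃ (i j k : ℤ) (hijk : i + j + k = n) (x : M i) (a : A j) (y : N k),
      w = grLof R M N tM tN n ⟨(i + j, k), by omega⟩
            ((Submodule.Quotient.mk (ξ i j x a) : GrM R M tM (i + j)) ⊗ₜ[R]
              (Submodule.Quotient.mk y : GrN R N tN k))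
        - grLof R M N tM tN n ⟨(i, j + k), by omega⟩
            ((Submodule.Quotient.mk x : GrM R M tM i) ⊗ₜ[R]
              (Submodule.Quotient.mk (ζ j k a y) : GrN R N tN (j + k)))}

/-- Degree `n` of the graded balanced product `Gr(M) ⊗_{Gr(A)} Gr(N)`. -/
abbrev GrRHS (n : ℤ) : Type :=
  @HasQuotient.Quotient (GrSum R M N tM tN n) (Submodule R (GrSum R M N tM tN n))
    (@Submodule.hasQuotient R (GrSum R M N tM tN n) _ _ _) (GrBalRel R A M N tM tN ξ ζ n)

/-! Both sides are quotients of `⊕_{i+j=n} Mᵢ ⊗ Nⱼ`. In `Gr_n(M ⊛_A N)` the image of degree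
`n - 1` is spanned by the `x ⊗ t y`, which the Day-convolution relations identify with the
`t x ⊗ y`; killing both families is, by right exactness of `⊗`, the same as passing to
`⊕ Gr_i M ⊗ Gr_j N`, and the balancing relations match term by term. So each of the two quotient
maps kills the relations of the other, and they induce mutually inverse maps. -/

section GrBalIso
variable (n : ℤ)

def toGrBal : MNSum R M N n →ₗ[R] GrBal R A M N tM tN ξ ζ n :=
  (BalIm R A M N tM tN ξ ζ n).mkQ ∘ₗ (BalRel R A M N tM tN ξ ζ n).mkQ ∘ₗ
    (MNConvRel R M N tM tN n).mkQ

lemma toGrBal_apply (z : MNSum R M N n) :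
    toGrBal R A M N tM tN ξ ζ n z
      = Submodule.Quotient.mk (Submodule.Quotient.mk (Submodule.Quotient.mk z)) := rfl

lemma toGrBal_surjective : Function.Surjective (toGrBal R A M N tM tN ξ ζ n) :=
  (Submodule.mkQ_surjective _).comp <|
    (Submodule.mkQ_surjective _).comp (Submodule.mkQ_surjective _)

-- `j'` is kept apart from `j + 1` so that the lemma applies to a summand `p`, whose `p.1.2` is not
-- syntactically a successor.
lemma toGrBal_tmul_tN (i j j' : ℤ) (hj : j' = j + 1) (h : i + j' = n) (hle : j ≤ j')
    (x : M i) (y : N j) :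
    toGrBal R A M N tM tN ξ ζ n (mnLof R M N n ⟨(i, j'), h⟩ (x ⊗ₜ[R] tN j j' hle y)) = 0 := by
  subst hj
  exact (Submodule.Quotient.mk_eq_zero _).2 (Submodule.subset_span ⟨i, j, by omega, x, y, rfl⟩)

lemma toGrBal_tM_tmul (i i' j : ℤ) (hi : i' = i + 1) (h : i' + j = n) (hle : i ≤ i')
    (x : M i) (y : N j) :
    toGrBal R A M N tM tN ξ ζ n (mnLof R M N n ⟨(i', j), h⟩ (tM i i' hle x ⊗ₜ[R] y)) = 0 := by
  subst hi
  have hconv : (Submodule.Quotient.mk (mnLof R M N n ⟨(i, j + 1), by omega⟩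
        (x ⊗ₜ[R] tN j (j + 1) (by omega) y)) : MNConv R M N tM tN n)
      = Submodule.Quotient.mk (mnLof R M N n ⟨(i + 1, j), h⟩ (tM i (i + 1) hle x ⊗ₜ[R] y)) :=
    (Submodule.Quotient.eq _).2 (Submodule.subset_span ⟨i, j, by omega, x, y, rfl⟩)
  rw [toGrBal_apply, ← hconv, ← toGrBal_apply]
  exact toGrBal_tmul_tN R A M N tM tN ξ ζ n i j (j + 1) rfl (by omega) (by omega) x y

lemma toGrBal_balanced (i j k : ℤ) (hijk : i + j + k = n) (x : M i) (a : A j) (y : N k) :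
    toGrBal R A M N tM tN ξ ζ n (mnLof R M N n ⟨(i + j, k), by omega⟩ (ξ i j x a ⊗ₜ[R] y))
      = toGrBal R A M N tM tN ξ ζ n (mnLof R M N n ⟨(i, j + k), by omega⟩ (x ⊗ₜ[R] ζ j k a y)) :=
  congrArg Submodule.Quotient.mk <|
    (Submodule.Quotient.eq _).2 (Submodule.subset_span ⟨i, j, k, hijk, x, a, y, rfl⟩)

lemma grBal_hom_ext {P : Type} [AddCommGroup P] [Module R P]
    {f g : GrBal R A M N tM tN ξ ζ n →ₗ[R] P}
    (h : ∀ (p : CIdx n) (x : M p.1.1) (y : N p.1.2),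
      f (toGrBal R A M N tM tN ξ ζ n (mnLof R M N n p (x ⊗ₜ[R] y)))
        = g (toGrBal R A M N tM tN ξ ζ n (mnLof R M N n p (x ⊗ₜ[R] y)))) :
    f = g := by
  refine (LinearMap.cancel_right (toGrBal_surjective R A M N tM tN ξ ζ n)).1 ?_
  exact DirectSum.linearMap_ext R fun p => TensorProduct.ext' (h p)

def liftGrBal {P : Type} [AddCommGroup P] [Module R P] (f : MNSum R M N n →ₗ[R] P)
    (htN : ∀ (i j : ℤ) (hij : i + j + 1 = n) (x : M i) (y : N j),
      f (mnLof R M N n ⟨(i, j + 1), by omega⟩ (x ⊗ₜ[R] tN j (j + 1) (by omega) y)) = 0)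
    (htM : ∀ (i j : ℤ) (hij : i + j + 1 = n) (x : M i) (y : N j),
      f (mnLof R M N n ⟨(i + 1, j), by omega⟩ (tM i (i + 1) (by omega) x ⊗ₜ[R] y)) = 0)
    (hbal : ∀ (i j k : ℤ) (hijk : i + j + k = n) (x : M i) (a : A j) (y : N k),
      f (mnLof R M N n ⟨(i + j, k), by omega⟩ (ξ i j x a ⊗ₜ[R] y))
        = f (mnLof R M N n ⟨(i, j + k), by omega⟩ (x ⊗ₜ[R] ζ j k a y))) :
    GrBal R A M N tM tN ξ ζ n →ₗ[R] P :=
  let f₁ := (MNConvRel R M N tM tN n).liftQ f <| (Submodule.span_le).2 <| by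
    rintro _ ⟨i, j, hij, x, y, rfl⟩
    simp [htN i j hij, htM i j hij]
  let f₂ := (BalRel R A M N tM tN ξ ζ n).liftQ f₁ <| (Submodule.span_le).2 <| by
    rintro _ ⟨i, j, k, hijk, x, a, y, rfl⟩
    simp only [SetLike.mem_coe, LinearMap.mem_ker, map_sub]
    exact sub_eq_zero.2 (hbal i j k hijk x a y)
  (BalIm R A M N tM tN ξ ζ n).liftQ f₂ <| (Submodule.span_le).2 <| by
    rintro _ ⟨i, j, hij, x, y, rfl⟩
    exact htN i j hij x y

lemma liftGrBal_toGrBal {P : Type} [AddCommGroup P] [Module R P] (f : MNSum R M N n →ₗ[R] P)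
    (htN htM hbal) (z : MNSum R M N n) :
    liftGrBal R A M N tM tN ξ ζ n f htN htM hbal (toGrBal R A M N tM tN ξ ζ n z) = f z :=
  rfl

lemma grM_mk_tM (i i' : ℤ) (hi : i' = i + 1) (hle : i ≤ i') (x : M i) :
    (Submodule.Quotient.mk (tM i i' hle x) : GrM R M tM i') = 0 := by
  obtain rfl : i = i' - 1 := by omega
  exact (Submodule.Quotient.mk_eq_zero _).2 ⟨x, rfl⟩

lemma grN_mk_tN (j j' : ℤ) (hj : j' = j + 1) (hle : j ≤ j') (y : N j) :
    (Submodule.Quotient.mk (tN j j' hle y) : GrN R N tN j') = 0 := by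
  obtain rfl : j = j' - 1 := by omega
  exact (Submodule.Quotient.mk_eq_zero _).2 ⟨y, rfl⟩

def toGrRHS : MNSum R M N n →ₗ[R] GrRHS R A M N tM tN ξ ζ n :=
  -- the module instance is the one spelled out in `GrRHS`; left to unification, `mkQ` times out
  @Submodule.mkQ R (GrSum R M N tM tN n) _ inferInstance _ (GrBalRel R A M N tM tN ξ ζ n) ∘ₗ
    DirectSum.lmap fun p =>
      TensorProduct.map (LinearMap.range (tM (p.1.1 - 1) p.1.1 (by omega))).mkQ
        (LinearMap.range (tN (p.1.2 - 1) p.1.2 (by omega))).mkQ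

lemma toGrRHS_lof (p : CIdx n) (x : M p.1.1) (y : N p.1.2) :
    toGrRHS R A M N tM tN ξ ζ n (mnLof R M N n p (x ⊗ₜ[R] y))
      = Submodule.Quotient.mk (grLof R M N tM tN n p
          ((Submodule.Quotient.mk x : GrM R M tM p.1.1) ⊗ₜ[R]
            (Submodule.Quotient.mk y : GrN R N tN p.1.2))) := by
  simp [toGrRHS]

def grBalToGrRHS : GrBal R A M N tM tN ξ ζ n →ₗ[R] GrRHS R A M N tM tN ξ ζ n :=
  liftGrBal R A M N tM tN ξ ζ n (toGrRHS R A M N tM tN ξ ζ n)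
    (fun i j _ x y => by
      rw [toGrRHS_lof, grN_mk_tN R N tN j (j + 1) rfl, TensorProduct.tmul_zero, map_zero,
        Submodule.Quotient.mk_zero])
    (fun i j _ x y => by
      rw [toGrRHS_lof, grM_mk_tM R M tM i (i + 1) rfl, TensorProduct.zero_tmul, map_zero,
        Submodule.Quotient.mk_zero])
    (fun i j k hijk x a y => by
      rw [toGrRHS_lof, toGrRHS_lof, Submodule.Quotient.eq]
      exact Submodule.subset_span ⟨i, j, k, hijk, x, a, y, rfl⟩)

def grSumToGrBal : GrSum R M N tM tN n →ₗ[R] GrBal R A M N tM tN ξ ζ n :=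
  DirectSum.toModule R (CIdx n) _ fun p => TensorProduct.lift <|
    LinearMap.liftQ₂ _ _
      ((TensorProduct.mk R _ _).compr₂ (toGrBal R A M N tM tN ξ ζ n ∘ₗ mnLof R M N n p))
      (by
        rintro _ ⟨x, rfl⟩
        ext y
        exact toGrBal_tM_tmul R A M N tM tN ξ ζ n _ _ _ (by omega) p.2 _ x y)
      (by
        rintro _ ⟨y, rfl⟩
        ext x
        exact toGrBal_tmul_tN R A M N tM tN ξ ζ n _ _ _ (by omega) p.2 _ x y)

lemma grSumToGrBal_grLof (p : CIdx n) (x : M p.1.1) (y : N p.1.2) :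
    grSumToGrBal R A M N tM tN ξ ζ n (grLof R M N tM tN n p
        ((Submodule.Quotient.mk x : GrM R M tM p.1.1) ⊗ₜ[R]
          (Submodule.Quotient.mk y : GrN R N tN p.1.2)))
      = toGrBal R A M N tM tN ξ ζ n (mnLof R M N n p (x ⊗ₜ[R] y)) := by
  simp [grSumToGrBal]

def grRHSToGrBal : GrRHS R A M N tM tN ξ ζ n →ₗ[R] GrBal R A M N tM tN ξ ζ n :=
  Submodule.liftQ _ (grSumToGrBal R A M N tM tN ξ ζ n) <| (Submodule.span_le).2 <| by
    rintro _ ⟨i, j, k, hijk, x, a, y, rfl⟩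
    simp only [SetLike.mem_coe, LinearMap.mem_ker, map_sub, grSumToGrBal_grLof]
    exact sub_eq_zero.2 (toGrBal_balanced R A M N tM tN ξ ζ n i j k hijk x a y)

lemma grRHS_hom_ext {P : Type} [AddCommGroup P] [Module R P]
    {f g : GrRHS R A M N tM tN ξ ζ n →ₗ[R] P}
    (h : ∀ (p : CIdx n) (x : M p.1.1) (y : N p.1.2),
      f (Submodule.Quotient.mk (grLof R M N tM tN n p
          ((Submodule.Quotient.mk x : GrM R M tM p.1.1) ⊗ₜ[R]
            (Submodule.Quotient.mk y : GrN R N tN p.1.2))))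
        = g (Submodule.Quotient.mk (grLof R M N tM tN n p
          ((Submodule.Quotient.mk x : GrM R M tM p.1.1) ⊗ₜ[R]
            (Submodule.Quotient.mk y : GrN R N tN p.1.2))))) :
    f = g := by
  refine Submodule.linearMap_qext _ <| DirectSum.linearMap_ext R fun p =>
    TensorProduct.ext' fun x y => ?_
  obtain ⟨x, rfl⟩ := Submodule.Quotient.mk_surjective _ x
  obtain ⟨y, rfl⟩ := Submodule.Quotient.mk_surjective _ y
  exact h p x y

lemma grBalToGrRHS_toGrBal (p : CIdx n) (x : M p.1.1) (y : N p.1.2) :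
    grBalToGrRHS R A M N tM tN ξ ζ n (toGrBal R A M N tM tN ξ ζ n (mnLof R M N n p (x ⊗ₜ[R] y)))
      = Submodule.Quotient.mk (grLof R M N tM tN n p
          ((Submodule.Quotient.mk x : GrM R M tM p.1.1) ⊗ₜ[R]
            (Submodule.Quotient.mk y : GrN R N tN p.1.2))) :=
  (liftGrBal_toGrBal R A M N tM tN ξ ζ n _ _ _ _ _).trans (toGrRHS_lof R A M N tM tN ξ ζ n p x y)

lemma grRHSToGrBal_mk (p : CIdx n) (x : M p.1.1) (y : N p.1.2) :
    grRHSToGrBal R A M N tM tN ξ ζ n (Submodule.Quotient.mk (grLof R M N tM tN n p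
        ((Submodule.Quotient.mk x : GrM R M tM p.1.1) ⊗ₜ[R]
          (Submodule.Quotient.mk y : GrN R N tN p.1.2))))
      = toGrBal R A M N tM tN ξ ζ n (mnLof R M N n p (x ⊗ₜ[R] y)) :=
  grSumToGrBal_grLof R A M N tM tN ξ ζ n p x y

def grBalEquivGrRHS : GrBal R A M N tM tN ξ ζ n ≃ₗ[R] GrRHS R A M N tM tN ξ ζ n :=
  LinearEquiv.ofLinearMap (grBalToGrRHS R A M N tM tN ξ ζ n) (grRHSToGrBal R A M N tM tN ξ ζ n)
    (grRHS_hom_ext R A M N tM tN ξ ζ n fun p x y => by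
      rw [LinearMap.comp_apply, grRHSToGrBal_mk, grBalToGrRHS_toGrBal, LinearMap.id_apply])
    (grBal_hom_ext R A M N tM tN ξ ζ n fun p x y => by
      rw [LinearMap.comp_apply, grBalToGrRHS_toGrBal, grRHSToGrBal_mk, LinearMap.id_apply])

end GrBalIso

/-- Let `A_*` be a filtered ring (a monoid for the Day convolution on `ℤ`-indexed filtered
modules, with transition maps `tA`, unit `u` and multiplications `μᵢⱼ : Aᵢ ⊗ Aⱼ → A_{i+j}`),
`M_*` a filtered right `A_*`-module and `N_*` a filtered left `A_*`-module, with the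
balanced product `M ⊛_{A} N` defined as the coequalizer of `M ⊛ A ⊛ N ⇉ M ⊛ N` in
filtered objects (using Day convolution).  Then there is a canonical natural isomorphism
`Gr(M ⊛_A N) ≅ Gr(M) ⊗_{Gr A} Gr(N)`, sending the class of `x ⊗ y ∈ Mᵢ ⊗ Nⱼ`
(`i + j = n`) to the class of `[x] ⊗ [y]`. -/
theorem stmt11 :
    ∀ n : ℤ, ∃ e : GrBal R A M N tM tN ξ ζ n ≃ₗ[R] GrRHS R A M N tM tN ξ ζ n,
      ∀ (i j : ℤ) (h : i + j = n) (x : M i) (y : N j),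
        e (Submodule.Quotient.mk (Submodule.Quotient.mk (Submodule.Quotient.mk
              (mnLof R M N n ⟨(i, j), h⟩ (x ⊗ₜ[R] y)))))
          = Submodule.Quotient.mk (grLof R M N tM tN n ⟨(i, j), h⟩
              ((Submodule.Quotient.mk x : GrM R M tM i) ⊗ₜ[R]
                (Submodule.Quotient.mk y : GrN R N tN j))) :=
  fun n => ⟨grBalEquivGrRHS R A M N tM tN ξ ζ n, fun i j h =>
    grBalToGrRHS_toGrBal R A M N tM tN ξ ζ n ⟨(i, j), h⟩⟩

end Stmt11
end
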